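/- Let N be a stable phylogenetic network on X and let P₁, P₂ ∈ π⁻(N) be distinct. Then the union of P₁ and P₂ contains a subgraph that is a reticulation cycle of N if and only if the vertices Ψ_N(P₁) and Ψ_N(P₂) of U(N) are contained in two distinct but isomorphic subMUL-trees of U(N), i.e., there exist distinct non-root vertices a and b of U(N) such that U(N)_a and U(N)_b are isomorphic, Ψ_N(P₁) is a vertex of U(N)_a, and Ψ_N(P₂) is a vertex of U(N)_b. -/

import Mathlib

/- ------------------------------------------------------------------
Common combinatorial framework for phylogenetic networks, MUL-trees,
un-fold and fold-up operations, following Huber--Moulton--Scornavacca--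
Steel and the paper "Three applications of un-fold/fold-up operations
for stable phylogenetic networks".

A `Net` is a rooted directed multigraph: `arcs u v` records the number
of parallel arcs from `u` to `v`.  Directed walks are recorded as lists
of *arc tokens* `(u, v, i)` (the `i`-th parallel arc from `u` to `v`),
so that parallel arcs give rise to different directed paths.
------------------------------------------------------------------- -/

open Classical

universe u v w

namespace Phylo

/-- A rooted directed multigraph on the vertex type `V`:  `arcs u v` is the
number of parallel arcs from `u` to `v`, `verts` is the vertex set and
`root` the root. -/
structure Net (V : Type u) where
  verts : Set V
  arcs : V → V → ℕ
  root : V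

/-- An arc token: `(u, v, i)` stands for the `i`-th parallel arc from `u` to `v`. -/
abbrev Arc (V : Type u) := V × V × ℕ

namespace Net

variable {V : Type u}

/-- The arc token `a` is a genuine arc of `N`. -/
def okArc (N : Net V) (a : Arc V) : Prop :=
  a.1 ∈ N.verts ∧ a.2.1 ∈ N.verts ∧ a.2.2 < N.arcs a.1 a.2.1

/-- `l` is a directed walk (possibly trivial) starting at the vertex `u`,
recorded as the list of its arc tokens. -/
def WalkFrom (N : Net V) (u : V) (l : List (Arc V)) : Prop :=
  u ∈ N.verts ∧ (∀ a ∈ l, N.okArc a) ∧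
    List.Chain' (fun a b : Arc V => a.2.1 = b.1) l ∧
    ∀ a ∈ l.head?, (a : Arc V).1 = u

/-- The end vertex of the walk `l` starting at `u`. -/
def endOf (u : V) (l : List (Arc V)) : V := (l.getLastD (u, u, 0)).2.1

/-- The list of vertices visited by a walk `l` starting at `u`. -/
def walkVerts (u : V) (l : List (Arc V)) : List V := u :: l.map (fun a => a.2.1)

/-- The inner (non-endpoint) vertices of a walk `l` starting at `u`. -/
def innerVerts (u : V) (l : List (Arc V)) : List V := ((walkVerts u l).dropLast).drop 1

/-- `w` is *below* `u` (there is a directed path from `u` to `w`; every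
vertex is below itself).  Equivalently, `u` is an *ancestor* of `w`. -/
def Reaches (N : Net V) (u w : V) : Prop := ∃ l, N.WalkFrom u l ∧ endOf u l = w

/-- The indegree of a vertex (counting parallel arcs). -/
noncomputable def inDeg (N : Net V) (v : V) : ℕ := ∑ᶠ u, N.arcs u v

/-- The outdegree of a vertex (counting parallel arcs). -/
noncomputable def outDeg (N : Net V) (v : V) : ℕ := ∑ᶠ u, N.arcs v u

/-- A leaf is a vertex of outdegree zero. -/
def IsLeaf (N : Net V) (v : V) : Prop := v ∈ N.verts ∧ N.outDeg v = 0

/-- An interior vertex is a non-leaf vertex. -/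
def IsInterior (N : Net V) (v : V) : Prop := v ∈ N.verts ∧ N.outDeg v ≠ 0

/-- A tree vertex is a vertex of indegree at most one. -/
def IsTreeVert (N : Net V) (v : V) : Prop := v ∈ N.verts ∧ N.inDeg v ≤ 1

/-- A hybrid vertex is a vertex of indegree at least two. -/
def IsHybrid (N : Net V) (v : V) : Prop := v ∈ N.verts ∧ 2 ≤ N.inDeg v

/-- The one-step arc relation. -/
def ArcRel (N : Net V) (u v : V) : Prop := 0 < N.arcs u v

/-- `N` contains no directed cycle. -/
def Acyclic (N : Net V) : Prop := ∀ v, ¬ Relation.TransGen N.ArcRel v v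

/-- A rooted connected pseudoDAG: a finite rooted directed (multi)graph with
no directed cycles in which every vertex is reachable from the root. -/
structure IsPseudoDAG (N : Net V) : Prop where
  finite : N.verts.Finite
  rootMem : N.root ∈ N.verts
  arcMem : ∀ u v, N.arcs u v ≠ 0 → u ∈ N.verts ∧ v ∈ N.verts
  acyclic : N.Acyclic
  connected : ∀ v ∈ N.verts, N.Reaches N.root v

/-- An `X`-network: a rooted connected pseudoDAG whose leaf set is `X`, where
the root has indegree zero, every non-leaf tree vertex has outdegree two,
every hybrid vertex has outdegree one, and every leaf has total degree one. -/
structure IsXNetwork (N : Net V) (X : Set V) extends IsPseudoDAG N : Prop where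
  rootInDeg : N.inDeg N.root = 0
  leafSet : ∀ v, N.IsLeaf v ↔ v ∈ X
  treeOutDeg : ∀ v ∈ N.verts, N.inDeg v ≤ 1 → N.outDeg v ≠ 0 → N.outDeg v = 2
  hybridOutDeg : ∀ v ∈ N.verts, 2 ≤ N.inDeg v → N.outDeg v = 1
  leafInDeg : ∀ v ∈ X, N.inDeg v = 1

/-- No parallel arcs. -/
def NoParallel (N : Net V) : Prop := ∀ u v, N.arcs u v ≤ 1

/-- A phylogenetic network on `X`: an `X`-network without parallel arcs. -/
structure IsPhyloNetwork (N : Net V) (X : Set V) extends IsXNetwork N X : Prop where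
  noParallel : N.NoParallel

/-- A phylogenetic tree on `X`: a phylogenetic network with no hybrid vertices. -/
structure IsPhyloTree (N : Net V) (X : Set V) extends IsPhyloNetwork N X : Prop where
  noHybrid : ∀ v, ¬ N.IsHybrid v

/-- A vertex with indegree one and outdegree one (to be suppressed). -/
def Suppressible (N : Net V) (v : V) : Prop :=
  v ∈ N.verts ∧ N.inDeg v = 1 ∧ N.outDeg v = 1

/-- The graph obtained from `N` by suppressing all vertices of indegree one and
outdegree one: kept vertices are the non-suppressible ones, and the number of
arcs from `u` to `w` is the number of directed paths from `u` to `w` in `N`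
all of whose inner vertices are suppressible. -/
noncomputable def suppr (N : Net V) : Net V where
  verts := {v ∈ N.verts | ¬ N.Suppressible v}
  arcs := fun u w =>
    if u ∈ N.verts ∧ ¬ N.Suppressible u ∧ w ∈ N.verts ∧ ¬ N.Suppressible w then
      Set.ncard {l : List (Arc V) | N.WalkFrom u l ∧ l ≠ [] ∧ endOf u l = w ∧
        ∀ x ∈ innerVerts u l, N.Suppressible x}
    else 0
  root := N.root

/-- `g` realizes an isomorphism of rooted multigraphs from `N` to `N'`. -/
def NetIsoVia {W : Type w} (N : Net V) (N' : Net W) (g : V → W) : Prop :=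
  Set.BijOn g N.verts N'.verts ∧
    (∀ u ∈ N.verts, ∀ v ∈ N.verts, N'.arcs (g u) (g v) = N.arcs u v) ∧
    g N.root = N'.root

/-- `w` is a vertex-stable ancestor of the leaf `x`: `w` is an interior vertex
lying on every directed path from the root to `x`. -/
def IsVSAncestor (N : Net V) (w x : V) : Prop :=
  N.IsInterior w ∧ N.IsLeaf x ∧
    ∀ l, N.WalkFrom N.root l → endOf N.root l = x → w ∈ walkVerts N.root l

/-- `N` is tree-child: every interior vertex has a child that is a tree vertex. -/
def TreeChild (N : Net V) : Prop :=
  ∀ v, N.IsInterior v → ∃ u, 0 < N.arcs v u ∧ N.IsTreeVert u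

/-- `N` is compressed: no arc has both its tail and its head hybrid. -/
def Compressed (N : Net V) : Prop :=
  ∀ u v, 0 < N.arcs u v → ¬(N.IsHybrid u ∧ N.IsHybrid v)

/-- `N` is reticulation-visible: every hybrid vertex is a vertex-stable
ancestor of some leaf. -/
def RetVisible (N : Net V) (X : Set V) : Prop :=
  ∀ h, N.IsHybrid h → ∃ x ∈ X, N.IsVSAncestor h x

/-- The set of arc tokens used by a walk. -/
def arcsOf (l : List (Arc V)) : Set (Arc V) := {a | a ∈ l}

/-- The union of the directed paths `p₁` and `p₂` contains a subgraph that is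
a reticulation cycle of `N`, i.e. the union of two arc-disjoint non-trivial
directed paths of `N` with the same start vertex and the same end vertex. -/
def ContainsRetCycle (N : Net V) (p₁ p₂ : List (Arc V)) : Prop :=
  ∃ (q₁ q₂ : List (Arc V)) (s e : V),
    N.WalkFrom s q₁ ∧ N.WalkFrom s q₂ ∧ q₁ ≠ [] ∧ q₂ ≠ [] ∧
    endOf s q₁ = e ∧ endOf s q₂ = e ∧
    Disjoint (arcsOf q₁) (arcsOf q₂) ∧
    arcsOf q₁ ∪ arcsOf q₂ ⊆ arcsOf p₁ ∪ arcsOf p₂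

/-- The set of vertices having a descendant in `Y`. -/
def keepSet (N : Net V) (Y : Set V) : Set V := {v ∈ N.verts | ∃ y ∈ Y, N.Reaches v y}

/-- The result of the leaf-removing operations applied to all leaves outside
`Y`: restrict to the vertices having a descendant in `Y` and suppress all
resulting vertices of indegree one and outdegree one. -/
noncomputable def restrictNet (N : Net V) (Y : Set V) : Net V :=
  Net.suppr
    { verts := N.keepSet Y
      arcs := fun u w => if u ∈ N.keepSet Y ∧ w ∈ N.keepSet Y then N.arcs u w else 0
      root := N.root }

end Net

/-- A labelled rooted directed multigraph: the data of a MUL-tree on the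
label set: `lab x` is the set of leaves labelled `x`. -/
structure LNet (V : Type u) (L : Type v) extends Net V where
  lab : L → Set V

namespace LNet

variable {V : Type u} {L : Type v}

/-- `M` is a MUL-tree on `X`: a rooted tree whose root has indegree `0`, with
no vertex of indegree one and outdegree one, in which every leaf carries
exactly one label from `X` and every label of `X` occurs. -/
structure IsMulTree (M : LNet V L) (X : Set L) : Prop where
  pseudo : M.toNet.IsPseudoDAG
  rootInDeg : M.toNet.inDeg M.root = 0
  inDegOne : ∀ v ∈ M.verts, v ≠ M.root → M.toNet.inDeg v = 1
  noSupp : ∀ v, ¬ M.toNet.Suppressible v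
  labLeaf : ∀ x ∈ X, ∀ l ∈ M.lab x, M.toNet.IsLeaf l
  labNonempty : ∀ x ∈ X, (M.lab x).Nonempty
  labCover : ∀ l, M.toNet.IsLeaf l → ∃! x, x ∈ X ∧ l ∈ M.lab x
  labOff : ∀ x, x ∉ X → M.lab x = ∅

/-- The set of vertices below `v`. -/
def belowSet (M : LNet V L) (v : V) : Set V := {w | M.toNet.Reaches v w}

/-- The subMUL-tree `M_v` of `M` rooted at the vertex `v` (delete the incoming
arc of `v` and restrict the labelling). -/
noncomputable def subAt (M : LNet V L) (v : V) : LNet V L where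
  verts := M.belowSet v
  arcs := fun u w => if u ∈ M.belowSet v ∧ w ∈ M.belowSet v then M.arcs u w else 0
  root := v
  lab := fun x => M.lab x ∩ M.belowSet v

/-- `η` realizes an isomorphism of MUL-trees (same label type). -/
def MulIsoVia {V' : Type w} (M : LNet V L) (M' : LNet V' L) (η : V → V') : Prop :=
  Set.BijOn η M.verts M'.verts ∧
    (∀ u ∈ M.verts, ∀ w ∈ M.verts, M'.arcs (η u) (η w) = M.arcs u w) ∧
    η M.root = M'.root ∧
    ∀ x : L, η '' (M.lab x ∩ M.verts) = M'.lab x ∩ M'.verts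

/-- Two labelled trees (on the same label type) are isomorphic. -/
def MulIso {V' : Type w} (M : LNet V L) (M' : LNet V' L) : Prop := ∃ η, MulIsoVia M M' η

/-- `η` realizes an isomorphism of MUL-trees on `X` modulo the label
translation `e`. -/
def MulIsoRelVia {V' : Type w} {L' : Type*} (M : LNet V L) (X : Set L)
    (M' : LNet V' L') (e : L → L') (η : V → V') : Prop :=
  Set.BijOn η M.verts M'.verts ∧
    (∀ u ∈ M.verts, ∀ w ∈ M.verts, M'.arcs (η u) (η w) = M.arcs u w) ∧
    η M.root = M'.root ∧
    ∀ x ∈ X, η '' (M.lab x ∩ M.verts) = M'.lab (e x) ∩ M'.verts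

/-- The equivalence relation `∼`: `u ∼ w` iff `u = w` or the subMUL-trees
`M_u` and `M_w` are isomorphic. -/
def Sim (M : LNet V L) (u w : V) : Prop := u = w ∨ MulIso (M.subAt u) (M.subAt w)

/-- The `∼`-equivalence class of `w`; the map `eqClass M : V(M) → V(M)/∼`
plays the role of the projection `p_M` onto the quotient. -/
def eqClass (M : LNet V L) (w : V) : Set V := {u ∈ M.verts | M.Sim u w}

/-- The quotient `V(M)/∼`, realized as the set of `∼`-equivalence classes. -/
def classSet (M : LNet V L) : Set (Set V) := M.eqClass '' M.verts

/-- `c` is a `∼`-equivalence class of `M`. -/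
def IsClassOf (M : LNet V L) (c : Set V) : Prop := ∃ w ∈ M.verts, c = M.eqClass w

/-- The class `c` gets a hybrid vertex above it in the fold-up of `M`:
some (equivalently, any) member of `c` has its parent in a strictly smaller
`∼`-class. -/
def ClassHyb (M : LNet V L) (c : Set V) : Prop :=
  ∃ w ∈ M.verts, c = M.eqClass w ∧ ∃ u, 0 < M.arcs u w ∧ (M.eqClass u).ncard < c.ncard

/-- `d` is the class of a parent of a member of `c`. -/
def IsParentClassOf (M : LNet V L) (d c : Set V) : Prop :=
  ∃ u w, 0 < M.arcs u w ∧ d = M.eqClass u ∧ c = M.eqClass w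

/-- The number of children inside `c` of a member of `d`. -/
noncomputable def childMult (M : LNet V L) (d c : Set V) : ℕ :=
  sSup {n : ℕ | ∃ u ∈ d, n = ∑ᶠ w ∈ c, M.arcs u w}

/-- The fold-up `F(M)` of the MUL-tree `M`: the `X`-network obtained by
repeatedly identifying all maximal inextendible subMUL-trees, subdividing
the incoming arcs of their roots and identifying the subdivision vertices.
Concretely, its tree vertices are the `∼`-classes of `M`, there is a hybrid
vertex above each class whose members have parents in a strictly smaller
class, and arcs are induced by the arcs of `M`. -/
noncomputable def foldUp (M : LNet V L) : Net (Set V ⊕ Set V) where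
  verts := (Sum.inl '' {c | M.IsClassOf c}) ∪
    (Sum.inr '' {c | M.IsClassOf c ∧ M.ClassHyb c})
  arcs := fun a b =>
    match a, b with
    | Sum.inl d, Sum.inl c =>
        if M.IsClassOf d ∧ M.IsClassOf c ∧ ¬ M.ClassHyb c ∧ M.IsParentClassOf d c
        then 1 else 0
    | Sum.inl d, Sum.inr c =>
        if M.IsClassOf d ∧ M.IsClassOf c ∧ M.ClassHyb c ∧ M.IsParentClassOf d c
        then M.childMult d c else 0
    | Sum.inr c, Sum.inl c' =>
        if c' = c ∧ M.IsClassOf c ∧ M.ClassHyb c then 1 else 0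
    | Sum.inr _, Sum.inr _ => 0
  root := Sum.inl (M.eqClass M.root)

/-- The `∼`-class of the leaves labelled `x`. -/
def labClass (M : LNet V L) (x : L) : Set V := {w ∈ M.verts | ∃ l ∈ M.lab x, M.Sim w l}

/-- The leaf set of the fold-up of `M`, identified with `X`. -/
def foldX (M : LNet V L) (X : Set L) : Set (Set V ⊕ Set V) :=
  (fun x => Sum.inl (M.labClass x)) '' X

/-- A MUL-tree is sound if its fold-up is a phylogenetic network. -/
def IsSound (M : LNet V L) (X : Set L) : Prop :=
  M.IsMulTree X ∧ Net.IsPhyloNetwork M.foldUp (M.foldX X)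

/-- An `X`-set of `M`: a set of leaves containing exactly one leaf labelled
`x` for every `x ∈ X`. -/
def IsXSet (M : LNet V L) (X : Set L) (C : Set V) : Prop :=
  (∀ l ∈ C, M.toNet.IsLeaf l) ∧ ∀ x ∈ X, ∃! l, l ∈ C ∧ l ∈ M.lab x

/-- `r` is the last common ancestor of the elements of `C`. -/
def IsLca (M : LNet V L) (r : V) (C : Set V) : Prop :=
  r ∈ M.verts ∧ (∀ c ∈ C, M.toNet.Reaches r c) ∧
    ∀ r' ∈ M.verts, (∀ c ∈ C, M.toNet.Reaches r' c) → M.toNet.Reaches r' r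

/-- The last common ancestor `r_C` of the elements of `C`. -/
noncomputable def lcaOf [Nonempty V] (M : LNet V L) (C : Set V) : V :=
  Classical.epsilon fun r => M.IsLca r C

/-- The vertex set of `M_C⁺`: all vertices on a directed path from
`lca(C)` to a leaf in `C`. -/
def subPlusVerts [Nonempty V] (M : LNet V L) (C : Set V) : Set V :=
  {v | M.toNet.Reaches (M.lcaOf C) v ∧ ∃ c ∈ C, M.toNet.Reaches v c}

/-- The tree `M_C⁺` spanned by the leaves in `C`; the canonical injection
`ξ_C⁺ : V(M_C⁺) → V(M)` is the set-inclusion `subPlusVerts M C ⊆ V`, so that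
the map `ξ̄_C⁺ = p_M ∘ ξ_C⁺` is realized by `eqClass M` restricted to
`subPlusVerts M C`. -/
noncomputable def subPlus [Nonempty V] (M : LNet V L) (C : Set V) : Net V where
  verts := M.subPlusVerts C
  arcs := fun u w => if u ∈ M.subPlusVerts C ∧ w ∈ M.subPlusVerts C then M.arcs u w else 0
  root := M.lcaOf C

/-- The phylogenetic tree `M_C` induced by the `X`-set `C`: suppress all
vertices of indegree one and outdegree one in `M_C⁺`. -/
noncomputable def mC [Nonempty V] (M : LNet V L) (C : Set V) : Net V := (M.subPlus C).suppr

/-- The set `V(M)^C`: the vertex `r_C` together with all vertices `v` such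
that no vertex below `v` is `∼`-equivalent to `r_C`. -/
def vmc [Nonempty V] (M : LNet V L) (C : Set V) : Set V :=
  insert (M.lcaOf C) {v ∈ M.verts | ∀ u, M.toNet.Reaches v u → ¬ M.Sim u (M.lcaOf C)}

/-- Vertices of `M` having a descendant leaf labelled by an element of `Y`. -/
def keepSet (M : LNet V L) (Y : Set L) : Set V :=
  {v ∈ M.verts | ∃ w, M.toNet.Reaches v w ∧ ∃ y ∈ Y, w ∈ M.lab y}

/-- The MUL-tree `M_Y` obtained from `M` by the leaf-removing operation:
remove all leaves labelled outside `Y` (together with everything having no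
leaf labelled in `Y` below it) and suppress all resulting vertices of
indegree one and outdegree one. -/
noncomputable def restrictMul (M : LNet V L) (Y : Set L) : LNet V L where
  toNet := Net.suppr
    { verts := M.keepSet Y
      arcs := fun u w => if u ∈ M.keepSet Y ∧ w ∈ M.keepSet Y then M.arcs u w else 0
      root := M.root }
  lab := fun y => if y ∈ Y then M.lab y else ∅

end LNet

namespace Net

variable {V : Type u}

/-- The vertex set of the un-fold `U(N)` of `N`: the set `π⁻(N)` of directed
paths of `N` starting at the root and ending in a tree vertex.  (The
bijection `Ψ_N : π⁻(N) → V(U(N))` is thereby realized as the identity.) -/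
def unfoldVerts (N : Net V) : Set (List (Arc V)) :=
  {p | N.WalkFrom N.root p ∧ N.IsTreeVert (endOf N.root p)}

/-- The un-fold `U(N)` of `N`, a MUL-tree on `X`: vertices are the directed
paths from the root ending in tree vertices, arcs correspond to extending
such a path by a single arc followed by a (possibly empty) run of hybrid
vertices, and the leaves labelled `x ∈ X` are the paths ending in `x`. -/
noncomputable def unfoldNet (N : Net V) (X : Set V) : LNet (List (Arc V)) V where
  verts := unfoldVerts N
  arcs := fun p q =>
    if p ∈ unfoldVerts N ∧ q ∈ unfoldVerts N ∧
        ∃ r, r ≠ [] ∧ q = p ++ r ∧ ∀ a ∈ r.dropLast, N.IsHybrid (a : Arc V).2.1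
    then 1 else 0
  root := []
  lab := fun x => if x ∈ X then {p ∈ unfoldVerts N | endOf N.root p = x} else ∅

end Net

/-- `N` is a stable phylogenetic network on `X`: `N` is a phylogenetic
network isomorphic to the fold-up of its un-fold, via an isomorphism fixing
`X` pointwise (i.e. sending each leaf `x` to the leaf of `F(U(N))`
corresponding to `x`). -/
def IsStable {V : Type u} (N : Net V) (X : Set V) : Prop :=
  Net.IsPhyloNetwork N X ∧
    ∃ g, Net.NetIsoVia N (Net.unfoldNet N X).foldUp g ∧
      ∀ x ∈ X, g x = Sum.inl ((Net.unfoldNet N X).labClass x)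

/-- `T` is endorsed by the MUL-tree `M` via the `X`-set `C`, the isomorphism
`T ≅ M_C` being realized by `σ` (which sends each `x ∈ X` to the unique leaf
of `C` labelled `x`). -/
def EndorsedVia {V : Type u} {W : Type w} [Nonempty W] (T : Net V) (X : Set V)
    (M : LNet W V) (C : Set W) (σ : V → W) : Prop :=
  M.IsXSet X C ∧ Net.NetIsoVia T (M.mC C) σ ∧ ∀ x ∈ X, σ x ∈ C ∧ σ x ∈ M.lab x

/-- `T` is endorsed by the MUL-tree `M` via the `X`-set `C`. -/
def Endorsed {V : Type u} {W : Type w} [Nonempty W] (T : Net V) (X : Set V)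
    (M : LNet W V) (C : Set W) : Prop :=
  ∃ σ, EndorsedVia T X M C σ

/-- `N'` is a subgraph of `N` with leaf set `X` which is (an isomorphic copy,
via the identity on `X`, of) a subdivision of `T`: suppressing all vertices
of indegree one and outdegree one in `N'` yields a tree isomorphic to `T`
via an isomorphism `g` fixing `X` pointwise. -/
def IsDisplayWitness {V : Type u} (N : Net V) (X : Set V) (T : Net V)
    (N' : Net V) (g : V → V) : Prop :=
  N'.verts ⊆ N.verts ∧ (∀ u v, N'.arcs u v ≤ N.arcs u v) ∧
    N'.root ∈ N'.verts ∧ (∀ v ∈ N'.verts, N'.Reaches N'.root v) ∧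
    (∀ v, N'.IsLeaf v ↔ v ∈ X) ∧
    Net.NetIsoVia T N'.suppr g ∧ ∀ x ∈ X, g x = x

/-- The phylogenetic tree `T` is displayed by `N`. -/
def Displays {V : Type u} (N : Net V) (X : Set V) (T : Net V) : Prop :=
  ∃ N' g, IsDisplayWitness N X T N' g

/-- The phylogenetic tree `T` is strongly displayed by `N`: it is displayed
via a subdivision whose root is the root of `N`. -/
def StronglyDisplays {V : Type u} (N : Net V) (X : Set V) (T : Net V) : Prop :=
  ∃ N' g, IsDisplayWitness N X T N' g ∧ N'.root = N.root

/-- `G` is a rooted tree. -/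
structure IsRootedTree {V : Type u} (G : Net V) : Prop where
  pseudo : G.IsPseudoDAG
  rootInDeg : G.inDeg G.root = 0
  inDegOne : ∀ v ∈ G.verts, v ≠ G.root → G.inDeg v = 1

/-- `T'` is a subdivision of `T` (with the identity on `X`): `T'` is a rooted
tree which, after suppressing all vertices of indegree one and outdegree one,
is isomorphic to `T` via an isomorphism fixing `X` pointwise. -/
def IsSubdivisionOf {V : Type u} (T' T : Net V) (X : Set V) : Prop :=
  IsRootedTree T' ∧ ∃ g, Net.NetIsoVia T T'.suppr g ∧ ∀ x ∈ X, g x = x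

/-- `T` is a base tree for `N`: `N` can be obtained from `T` by subdividing
some arcs of `T`, adding arcs between the subdivision vertices without
creating parallel arcs or directed cycles, and suppressing all subdivision
vertices still of indegree one and outdegree one. -/
def IsBaseTreeFor {V : Type u} (T : Net V) (X : Set V) (N : Net V) : Prop :=
  ∃ T' G : Net V,
    IsSubdivisionOf T' T X ∧
    G.verts = T'.verts ∧ G.root = T'.root ∧
    (∀ u v, T'.arcs u v ≤ G.arcs u v) ∧
    (∀ u v, T'.arcs u v ≠ G.arcs u v → T'.Suppressible u ∧ T'.Suppressible v) ∧
    G.NoParallel ∧ G.Acyclic ∧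
    ∃ h, Net.NetIsoVia G.suppr N h ∧ ∀ x ∈ X, h x = x

end Phylo

/-! A reticulation cycle inside `P₁ ∪ P₂` ends with two distinct arcs into one vertex `e`, one
on each path (a directed path enters `e` only once). Cutting `P₁` and `P₂` at the first tree
vertex after `e` gives two distinct vertices of `U(N)`; as a hybrid vertex has a single outgoing
arc, both cuts end at the same tree vertex of `N`, and paths ending at the same vertex root
isomorphic subMUL-trees of `U(N)`.

Conversely, in a stable network `U(N)_a ≅ U(N)_b` forces `a` and `b` to end at the same vertex:
`F(U(N))` has one tree vertex per `∼`-class of `U(N)` and one hybrid vertex per hybrid class,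
and comparing with the tree and hybrid vertices of `N ≅ F(U(N))` shows that sending a tree
vertex `t` to the class of the paths ending at `t` is injective. Two distinct paths with common
start and end contain a reticulation cycle, cut out at the first vertex after their divergence
that both visit. -/

section Finsum

variable {α M : Type*} [AddCommMonoid M]

lemma finsum_mem_eq_finsum_of_support_subset {s : Set α} {f : α → M}
    (h : Function.support f ⊆ s) : ∑ᶠ x ∈ s, f x = ∑ᶠ x, f x :=
  (finsum_mem_inter_support_eq' f s Set.univ fun x hx => by simp [h hx]).trans (finsum_mem_univ f)

lemma add_le_finsum [PartialOrder M] [CanonicallyOrderedAdd M] [IsOrderedAddMonoid M]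
    {f : α → M} (hf : (Function.support f).Finite) {a b : α} (hab : a ≠ b) :
    f a + f b ≤ ∑ᶠ i, f i := by
  let s := insert a (insert b hf.toFinset)
  rw [finsum_eq_finsetSum_of_support_subset f (s := s) fun i hi => by simp [s, hi]]
  calc f a + f b = ∑ i ∈ {a, b}, f i := (Finset.sum_pair hab).symm
    _ ≤ ∑ i ∈ s, f i := Finset.sum_le_sum_of_subset (by simp [s, Finset.insert_subset_insert])

end Finsum

namespace Phylo

namespace Net

variable {V : Type u} {N : Net V} {X : Set V}

lemma endOf_cons (u : V) (a : Arc V) (l : List (Arc V)) :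
    endOf u (a :: l) = endOf a.2.1 l := by
  cases l with
  | nil => rfl
  | cons b t => simp [endOf, List.getLastD_eq_getLast?, List.getLast?_cons]

lemma endOf_append (u : V) (l₁ l₂ : List (Arc V)) :
    endOf u (l₁ ++ l₂) = endOf (endOf u l₁) l₂ := by
  induction l₁ generalizing u with
  | nil => rfl
  | cons a t ih => simp [endOf_cons, ih]

lemma endOf_concat (u : V) (l : List (Arc V)) (a : Arc V) : endOf u (l ++ [a]) = a.2.1 := by
  rw [endOf_append]; rfl

lemma walkFrom_nil {u : V} : N.WalkFrom u [] ↔ u ∈ N.verts :=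
  ⟨And.left, fun h => ⟨h, by simp, List.isChain_nil, by simp⟩⟩

lemma walkFrom_cons {u : V} {a : Arc V} {l : List (Arc V)} :
    N.WalkFrom u (a :: l) ↔ a.1 = u ∧ u ∈ N.verts ∧ N.okArc a ∧ N.WalkFrom a.2.1 l := by
  constructor
  · rintro ⟨hu, hok, hch, hhd⟩
    have ha : N.okArc a := hok a List.mem_cons_self
    refine ⟨hhd a rfl, hu, ha, ha.2.1, fun b hb => hok b (List.mem_cons_of_mem a hb),
      (List.isChain_cons.1 hch).2, fun b hb => ((List.isChain_cons.1 hch).1 b hb).symm⟩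
  · rintro ⟨rfl, hu, ha, -, hl, hch, hhd⟩
    refine ⟨hu, List.forall_mem_cons.2 ⟨ha, hl⟩,
      List.isChain_cons.2 ⟨fun b hb => (hhd b hb).symm, hch⟩, ?_⟩
    simp

lemma walkFrom_append {u : V} {l₁ l₂ : List (Arc V)} :
    N.WalkFrom u (l₁ ++ l₂) ↔ N.WalkFrom u l₁ ∧ N.WalkFrom (endOf u l₁) l₂ := by
  induction l₁ generalizing u with
  | nil => exact ⟨fun h => ⟨walkFrom_nil.2 h.1, h⟩, And.right⟩
  | cons a t ih =>
    simp only [List.cons_append, walkFrom_cons, endOf_cons, ih]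
    tauto

lemma WalkFrom.take {u : V} {l : List (Arc V)} (h : N.WalkFrom u l) (n : ℕ) :
    N.WalkFrom u (l.take n) := by
  rw [← l.take_append_drop n] at h
  exact (walkFrom_append.1 h).1

lemma WalkFrom.drop {u : V} {l : List (Arc V)} (h : N.WalkFrom u l) (n : ℕ) :
    N.WalkFrom (endOf u (l.take n)) (l.drop n) := by
  rw [← l.take_append_drop n] at h
  exact (walkFrom_append.1 h).2

lemma WalkFrom.endOf_mem {u : V} {l : List (Arc V)} (h : N.WalkFrom u l) :
    endOf u l ∈ N.verts := by
  induction l generalizing u with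
  | nil => exact h.1
  | cons a t ih => rw [endOf_cons]; exact ih (walkFrom_cons.1 h).2.2.2

lemma WalkFrom.transGen {u : V} {l : List (Arc V)} (h : N.WalkFrom u l) (hne : l ≠ []) :
    Relation.TransGen N.ArcRel u (endOf u l) := by
  induction l generalizing u with
  | nil => exact absurd rfl hne
  | cons a t ih =>
    obtain ⟨rfl, -, hok, hw⟩ := walkFrom_cons.1 h
    have har : N.ArcRel a.1 a.2.1 := lt_of_le_of_lt (Nat.zero_le _) hok.2.2
    rw [endOf_cons]
    rcases eq_or_ne t [] with rfl | ht
    · exact .single har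
    · exact .head har (ih hw ht)

lemma Acyclic.endOf_ne (hac : N.Acyclic) {u : V} {l : List (Arc V)} (h : N.WalkFrom u l)
    (hne : l ≠ []) : endOf u l ≠ u := by
  intro he
  have hcyc := h.transGen hne
  rw [he] at hcyc
  exact hac u hcyc

def vertAt (u : V) (l : List (Arc V)) (i : ℕ) : V := endOf u (l.take i)

@[simp] lemma vertAt_zero (u : V) (l : List (Arc V)) : vertAt u l 0 = u := rfl

lemma vertAt_length (u : V) (l : List (Arc V)) : vertAt u l l.length = endOf u l := by
  simp [vertAt]

lemma vertAt_take (u : V) (l : List (Arc V)) {i n : ℕ} (h : i ≤ n) :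
    vertAt u (l.take n) i = vertAt u l i := by
  simp [vertAt, List.take_take, min_eq_left h]

lemma snd_getElem_eq_vertAt (u : V) (l : List (Arc V)) {i : ℕ} (hi : i < l.length) :
    l[i].2.1 = vertAt u l (i + 1) := by
  rw [vertAt, List.take_add_one, List.getElem?_eq_getElem hi]
  exact (endOf_concat u _ _).symm

lemma WalkFrom.fst_getElem_eq_vertAt {u : V} {l : List (Arc V)} (hw : N.WalkFrom u l) {i : ℕ}
    (hi : i < l.length) : l[i].1 = vertAt u l i := by
  induction l generalizing u i with
  | nil => simp at hi
  | cons a t ih =>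
    obtain ⟨rfl, -, -, hw⟩ := walkFrom_cons.1 hw
    cases i with
    | zero => rfl
    | succ i => simpa [vertAt, endOf_cons] using ih hw (Nat.lt_of_succ_lt_succ hi)

lemma Acyclic.eq_of_vertAt_eq (hac : N.Acyclic) {u : V} {l : List (Arc V)} (hw : N.WalkFrom u l)
    {i j : ℕ} (hi : i ≤ l.length) (hj : j ≤ l.length) (he : vertAt u l i = vertAt u l j) :
    i = j := by
  wlog hij : i < j generalizing i j
  · rcases (not_lt.1 hij).lt_or_eq with h | h
    · exact (this hj hi he.symm h).symm
    · exact h.symm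
  have hseg : N.WalkFrom (vertAt u (l.take j) i) ((l.take j).drop i) := (hw.take j).drop i
  rw [vertAt_take u l hij.le] at hseg
  refine absurd ?_ (hac.endOf_ne hseg ?_)
  · calc endOf (vertAt u l i) ((l.take j).drop i) = vertAt u l j := by
          rw [← vertAt_take u l hij.le, vertAt, ← endOf_append, List.take_append_drop]; rfl
      _ = vertAt u l i := he.symm
  · simp only [ne_eq, List.drop_eq_nil_iff, List.length_take]; omega

lemma Acyclic.eq_of_snd_eq (hac : N.Acyclic) {u : V} {l : List (Arc V)} (hw : N.WalkFrom u l)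
    {α β : Arc V} (hα : α ∈ l) (hβ : β ∈ l) (he : α.2.1 = β.2.1) : α = β := by
  obtain ⟨i, hi, rfl⟩ := List.getElem_of_mem hα
  obtain ⟨j, hj, rfl⟩ := List.getElem_of_mem hβ
  rw [snd_getElem_eq_vertAt u l hi, snd_getElem_eq_vertAt u l hj] at he
  have := hac.eq_of_vertAt_eq hw (by omega) (by omega) he
  simp only [Nat.add_right_cancel_iff] at this
  subst this; rfl

lemma ContainsRetCycle.mono {P₁ P₂ P₁' P₂' : List (Arc V)} (h : N.ContainsRetCycle P₁ P₂)
    (h₁ : arcsOf P₁ ⊆ arcsOf P₁') (h₂ : arcsOf P₂ ⊆ arcsOf P₂') :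
    N.ContainsRetCycle P₁' P₂' := by
  obtain ⟨q₁, q₂, s, e, hw₁, hw₂, hn₁, hn₂, he₁, he₂, hdisj, hsub⟩ := h
  exact ⟨q₁, q₂, s, e, hw₁, hw₂, hn₁, hn₂, he₁, he₂, hdisj,
    hsub.trans (Set.union_subset_union h₁ h₂)⟩

/-- The reticulation cycle is cut out at the first vertex of `r₁` after `s` that `r₂` also
visits after `s`. -/
lemma Acyclic.containsRetCycle_of_head_ne (hac : N.Acyclic) {s : V} {r₁ r₂ : List (Arc V)}
    (hw₁ : N.WalkFrom s r₁) (hw₂ : N.WalkFrom s r₂) (hn₁ : r₁ ≠ []) (hn₂ : r₂ ≠ [])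
    (hend : endOf s r₁ = endOf s r₂) (hhead : r₁.head hn₁ ≠ r₂.head hn₂) :
    N.ContainsRetCycle r₁ r₂ := by
  have hl₁ : 0 < r₁.length := List.length_pos_iff.2 hn₁
  have hl₂ : 0 < r₂.length := List.length_pos_iff.2 hn₂
  let Meets : ℕ → Prop := fun i => 1 ≤ i ∧ i ≤ r₁.length ∧
    ∃ j, 1 ≤ j ∧ j ≤ r₂.length ∧ vertAt s r₂ j = vertAt s r₁ i
  have hex : ∃ i, Meets i :=
    ⟨r₁.length, hl₁, le_rfl, r₂.length, hl₂, le_rfl, by rw [vertAt_length, vertAt_length, hend]⟩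
  set i₀ := Nat.find hex
  obtain ⟨hi₁, hi₀, j₀, hj₁, hj₀, hv⟩ : Meets i₀ := Nat.find_spec hex
  refine ⟨r₁.take i₀, r₂.take j₀, s, vertAt s r₁ i₀, hw₁.take i₀, hw₂.take j₀, ?_, ?_, rfl, hv,
    ?_, Set.union_subset_union (fun α hα => List.mem_of_mem_take hα)
      (fun α hα => List.mem_of_mem_take hα)⟩
  · simp only [ne_eq, List.take_eq_nil_iff, not_or]; exact ⟨by omega, hn₁⟩
  · simp only [ne_eq, List.take_eq_nil_iff, not_or]; exact ⟨by omega, hn₂⟩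
  rw [Set.disjoint_left]
  intro α hα₁ hα₂
  obtain ⟨p₁, hp₁, rfl⟩ := List.getElem_of_mem hα₁
  obtain ⟨p₂, hp₂, hα⟩ := List.getElem_of_mem hα₂
  simp only [List.length_take, lt_min_iff, List.getElem_take] at hp₁ hp₂ hα
  have hsnd₁ := snd_getElem_eq_vertAt s r₁ hp₁.2
  have hsnd₂ := snd_getElem_eq_vertAt s r₂ hp₂.2
  have hfst₁ := hw₁.fst_getElem_eq_vertAt hp₁.2
  have hfst₂ := hw₂.fst_getElem_eq_vertAt hp₂.2
  rw [hα] at hsnd₂ hfst₂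
  -- the head of the common arc is a meeting vertex, hence it is the last vertex of both parts
  have hp₁' : p₁ + 1 = i₀ := le_antisymm (by omega) <| Nat.find_min' hex
    ⟨by omega, by omega, p₂ + 1, by omega, by omega, hsnd₂.symm.trans hsnd₁⟩
  have hp₂' : p₂ + 1 = j₀ := hac.eq_of_vertAt_eq hw₂ (by omega) hj₀ (by rw [← hsnd₂, hsnd₁, hp₁', hv])
  have htail : vertAt s r₂ p₂ = vertAt s r₁ p₁ := hfst₂.symm.trans hfst₁
  rcases Nat.eq_zero_or_pos p₁ with h₁ | h₁ <;> rcases Nat.eq_zero_or_pos p₂ with h₂ | h₂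
  · subst h₁ h₂
    exact hhead (by rw [List.head_eq_getElem, List.head_eq_getElem, ← hα])
  · have := hac.eq_of_vertAt_eq hw₂ (i := p₂) (j := 0) (by omega) (by omega)
      (by rw [htail, h₁, vertAt_zero, vertAt_zero])
    omega
  · have := hac.eq_of_vertAt_eq hw₁ (i := p₁) (j := 0) (by omega) (by omega)
      (by rw [← htail, h₂, vertAt_zero, vertAt_zero])
    omega
  · exact Nat.find_min hex (show p₁ < i₀ by omega) ⟨h₁, by omega, p₂, h₂, by omega, htail⟩

lemma Acyclic.containsRetCycle_of_ne (hac : N.Acyclic) {u : V} {a b : List (Arc V)}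
    (hwa : N.WalkFrom u a) (hwb : N.WalkFrom u b) (hne : a ≠ b)
    (hend : endOf u a = endOf u b) : N.ContainsRetCycle a b := by
  induction a generalizing u b with
  | nil =>
    exact absurd hend.symm (hac.endOf_ne hwb (Ne.symm hne))
  | cons α a ih =>
    cases b with
    | nil => exact absurd hend (hac.endOf_ne hwa hne)
    | cons β b =>
      by_cases hαβ : α = β
      · subst hαβ
        obtain ⟨-, -, -, hwa'⟩ := walkFrom_cons.1 hwa
        obtain ⟨-, -, -, hwb'⟩ := walkFrom_cons.1 hwb
        rw [endOf_cons, endOf_cons] at hend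
        exact (ih hwa' hwb' (fun h => hne (h ▸ rfl)) hend).mono
          (fun γ hγ => List.mem_cons_of_mem α hγ) (fun γ hγ => List.mem_cons_of_mem α hγ)
      · exact hac.containsRetCycle_of_head_ne hwa hwb (List.cons_ne_nil α a)
          (List.cons_ne_nil β b) hend hαβ

lemma ContainsRetCycle.exists_ne_snd_eq (hac : N.Acyclic) {u₁ u₂ : V} {P₁ P₂ : List (Arc V)}
    (hw₁ : N.WalkFrom u₁ P₁) (hw₂ : N.WalkFrom u₂ P₂) (h : N.ContainsRetCycle P₁ P₂) :
    ∃ γ₁ ∈ P₁, ∃ γ₂ ∈ P₂, γ₁ ≠ γ₂ ∧ γ₁.2.1 = γ₂.2.1 := by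
  obtain ⟨q₁, q₂, s, e, -, -, hn₁, hn₂, he₁, he₂, hdisj, hsub⟩ := h
  obtain ⟨q₁, β₁, rfl⟩ := (q₁.eq_nil_or_concat).resolve_left hn₁
  obtain ⟨q₂, β₂, rfl⟩ := (q₂.eq_nil_or_concat).resolve_left hn₂
  rw [List.concat_eq_append, endOf_concat] at he₁ he₂
  rw [List.concat_eq_append, List.concat_eq_append] at hdisj hsub
  have hβ₁ : β₁ ∈ arcsOf (q₁ ++ [β₁]) := List.mem_append_right q₁ (List.mem_singleton_self β₁)
  have hβ₂ : β₂ ∈ arcsOf (q₂ ++ [β₂]) := List.mem_append_right q₂ (List.mem_singleton_self β₂)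
  have hne : β₁ ≠ β₂ := fun h => Set.disjoint_left.1 hdisj hβ₁ (by rw [h]; exact hβ₂)
  have hhead : β₁.2.1 = β₂.2.1 := he₁.trans he₂.symm
  rcases hsub (.inl hβ₁) with m₁ | m₁ <;> rcases hsub (.inr hβ₂) with m₂ | m₂
  · exact absurd (hac.eq_of_snd_eq hw₁ m₁ m₂ hhead) hne
  · exact ⟨β₁, m₁, β₂, m₂, hne, hhead⟩
  · exact ⟨β₂, m₂, β₁, m₁, hne.symm, hhead.symm⟩
  · exact absurd (hac.eq_of_snd_eq hw₂ m₁ m₂ hhead) hne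

lemma Reaches.refl {u : V} (h : u ∈ N.verts) : N.Reaches u u :=
  ⟨[], walkFrom_nil.2 h, rfl⟩

lemma Reaches.tail {u v w : V} (h : N.Reaches u v) (ha : 0 < N.arcs v w)
    (hw : w ∈ N.verts) : N.Reaches u w := by
  obtain ⟨l, hl, rfl⟩ := h
  have hv := hl.endOf_mem
  refine ⟨l ++ [(endOf u l, w, 0)], walkFrom_append.2 ⟨hl, ?_⟩, endOf_concat u l _⟩
  exact walkFrom_cons.2 ⟨rfl, hv, ⟨hv, hw, ha⟩, walkFrom_nil.2 hw⟩

lemma isTreeVert_or_isHybrid {v : V} (hv : v ∈ N.verts) : N.IsTreeVert v ∨ N.IsHybrid v := by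
  rcases le_or_gt (N.inDeg v) 1 with h | h
  · exact .inl ⟨hv, h⟩
  · exact .inr ⟨hv, h⟩

lemma IsTreeVert.not_isHybrid {v : V} (h : N.IsTreeVert v) : ¬ N.IsHybrid v :=
  fun h' => by have := h.2; have := h'.2; omega

lemma NetIsoVia.outDeg_eq {W : Type w} {N : Net V} {F : Net W} {g : V → W} (hg : NetIsoVia N F g)
    (harc : ∀ u v, N.arcs u v ≠ 0 → v ∈ N.verts) (hFarc : ∀ a b, F.arcs a b ≠ 0 → b ∈ F.verts)
    {v : V} (hv : v ∈ N.verts) : F.outDeg (g v) = N.outDeg v := by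
  unfold outDeg
  rw [← finsum_mem_eq_finsum_of_support_subset (hFarc (g v)), ← hg.1.image_eq,
    finsum_mem_image hg.1.injOn, ← finsum_mem_eq_finsum_of_support_subset (harc v)]
  exact finsum_mem_congr rfl fun u hu => hg.2.1 v hv u hu

lemma IsXNetwork.isHybrid_of_outDeg_eq_one (hN : N.IsXNetwork X) {v : V} (hv : v ∈ N.verts)
    (hout : N.outDeg v = 1) : N.IsHybrid v :=
  (isTreeVert_or_isHybrid hv).resolve_left fun ht => by
    have := hN.treeOutDeg v hv ht.2 (by omega)
    omega

lemma NoParallel.eq_of_okArc (hN : N.NoParallel) {α β : Arc V} (hα : N.okArc α)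
    (hβ : N.okArc β) (h₁ : α.1 = β.1) (h₂ : α.2.1 = β.2.1) : α = β := by
  have := hN α.1 α.2.1
  have := hN β.1 β.2.1
  have := hα.2.2
  have := hβ.2.2
  exact Prod.ext h₁ (Prod.ext h₂ (by omega))

lemma IsPhyloNetwork.eq_of_okArc_of_isHybrid (hN : N.IsPhyloNetwork X) {α β : Arc V}
    (hα : N.okArc α) (hβ : N.okArc β) (h : α.1 = β.1) (hh : N.IsHybrid α.1) : α = β := by
  refine hN.noParallel.eq_of_okArc hα hβ h (by_contra fun hne => ?_)
  have hsupp : (Function.support fun w => N.arcs α.1 w).Finite :=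
    hN.finite.subset fun w hw => (hN.arcMem _ w hw).2
  have hsum := add_le_finsum hsupp hne
  have hout : N.outDeg α.1 = 1 := hN.hybridOutDeg α.1 hh.1 hh.2
  have hβ' := hβ.2.2
  rw [← h] at hβ'
  have := hα.2.2
  rw [outDeg] at hout
  omega

lemma WalkFrom.exists_hybridRun {e : V} {l : List (Arc V)} (hw : N.WalkFrom e l)
    (ht : N.IsTreeVert (endOf e l)) :
    ∃ r s, l = r ++ s ∧ (∀ a ∈ r, N.IsHybrid (a : Arc V).1) ∧ N.IsTreeVert (endOf e r) := by
  induction l generalizing e with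
  | nil => exact ⟨[], [], rfl, by simp, ht⟩
  | cons α l ih =>
    obtain ⟨rfl, hv, -, hw⟩ := walkFrom_cons.1 hw
    rcases isTreeVert_or_isHybrid hv with ht' | hh
    · exact ⟨[], α :: l, rfl, by simp, ht'⟩
    · obtain ⟨r, s, rfl, hr, hrt⟩ := ih hw (by rwa [endOf_cons] at ht)
      exact ⟨α :: r, s, rfl, by simpa [hh] using hr, by rwa [endOf_cons]⟩

lemma IsPhyloNetwork.hybridRun_unique (hN : N.IsPhyloNetwork X) {e : V} {r₁ r₂ : List (Arc V)}
    (hw₁ : N.WalkFrom e r₁) (hw₂ : N.WalkFrom e r₂)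
    (hr₁ : ∀ a ∈ r₁, N.IsHybrid (a : Arc V).1) (hr₂ : ∀ a ∈ r₂, N.IsHybrid (a : Arc V).1)
    (ht₁ : N.IsTreeVert (endOf e r₁)) (ht₂ : N.IsTreeVert (endOf e r₂)) : r₁ = r₂ := by
  induction r₁ generalizing e r₂ with
  | nil =>
    cases r₂ with
    | nil => rfl
    | cons β r₂ =>
      obtain ⟨rfl, -⟩ := walkFrom_cons.1 hw₂
      exact absurd (hr₂ β (by simp)) ht₁.not_isHybrid
  | cons α r₁ ih =>
    obtain ⟨rfl, -, hα, hw₁⟩ := walkFrom_cons.1 hw₁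
    cases r₂ with
    | nil => exact absurd (hr₁ α (by simp)) ht₂.not_isHybrid
    | cons β r₂ =>
      obtain ⟨hβα, -, hβ, hw₂⟩ := walkFrom_cons.1 hw₂
      obtain rfl := hN.eq_of_okArc_of_isHybrid hα hβ hβα.symm (hr₁ α (by simp))
      rw [ih hw₁ hw₂ (fun a ha => hr₁ a (by simp [ha])) (fun a ha => hr₂ a (by simp [ha]))
        (by rwa [endOf_cons] at ht₁) (by rwa [endOf_cons] at ht₂)]

lemma unfoldNet_arcs_pos_iff {p q : List (Arc V)} :
    0 < (N.unfoldNet X).arcs p q ↔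
      p ∈ N.unfoldVerts ∧ q ∈ N.unfoldVerts ∧
        ∃ r, r ≠ [] ∧ q = p ++ r ∧ ∀ a ∈ r.dropLast, N.IsHybrid (a : Arc V).2.1 := by
  simp only [unfoldNet]
  split_ifs with h <;> simpa using h

lemma Reaches.prefix_of_unfoldNet {p q : List (Arc V)} (h : (N.unfoldNet X).Reaches p q) :
    p <+: q := by
  obtain ⟨l, hw, rfl⟩ := h
  induction l generalizing p with
  | nil => exact List.prefix_refl p
  | cons α l ih =>
    obtain ⟨rfl, -, hok, hw⟩ := walkFrom_cons.1 hw
    obtain ⟨-, -, r, -, hr, -⟩ := unfoldNet_arcs_pos_iff.1 (Nat.zero_lt_of_lt hok.2.2)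
    rw [endOf_cons]
    exact (hr ▸ List.prefix_append α.1 r).trans (ih hw)

/-- Induction on `r`, carrying along a run `s` of hybrid vertices not yet closed off by a tree
vertex. -/
lemma reaches_unfoldNet_append {p₀ : List (Arc V)} :
    ∀ (r p s : List (Arc V)), (N.unfoldNet X).Reaches p₀ p → p ∈ N.unfoldVerts →
      (∀ a ∈ s, N.IsHybrid (a : Arc V).2.1) → p ++ s ++ r ∈ N.unfoldVerts →
      (N.unfoldNet X).Reaches p₀ (p ++ s ++ r) := by
  intro r
  induction r with
  | nil =>
    intro p s hp hpv hs hv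
    rcases s.eq_nil_or_concat with rfl | ⟨s, α, rfl⟩
    · simpa using hp
    · have ht := hv.2
      simp only [List.concat_eq_append, List.append_nil, ← List.append_assoc,
        endOf_concat] at ht
      exact absurd (hs α (by simp)) ht.not_isHybrid
  | cons α r ih =>
    intro p s hp hpv hs hv
    have hα : α.2.1 ∈ N.verts := by
      have hw := (walkFrom_append.1 hv.1).2
      exact (walkFrom_cons.1 hw).2.2.1.2.1
    rcases isTreeVert_or_isHybrid hα with ht | hh
    · have hpα : p ++ (s ++ [α]) ∈ N.unfoldVerts := by
        refine ⟨?_, ?_⟩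
        · have := hv.1
          rw [show p ++ s ++ α :: r = p ++ (s ++ [α]) ++ r by simp] at this
          exact (walkFrom_append.1 this).1
        · rw [← List.append_assoc, endOf_concat]; exact ht
      have harc : 0 < (N.unfoldNet X).arcs p (p ++ (s ++ [α])) :=
        unfoldNet_arcs_pos_iff.2 ⟨hpv, hpα, s ++ [α], by simp, rfl, by simpa using hs⟩
      simpa using ih _ [] (hp.tail harc hpα) hpα (by simp) (by simpa using hv)
    · simpa using ih p (s ++ [α]) hp hpv (fun a ha => by
        rcases List.mem_append.1 ha with ha | ha
        exacts [hs a ha, List.mem_singleton.1 ha ▸ hh]) (by simpa using hv)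

lemma mem_belowSet_unfoldNet_iff {p q : List (Arc V)} (hp : p ∈ N.unfoldVerts) :
    q ∈ (N.unfoldNet X).belowSet p ↔ q ∈ N.unfoldVerts ∧ p <+: q := by
  constructor
  · intro h
    refine ⟨?_, Reaches.prefix_of_unfoldNet h⟩
    obtain ⟨l, hw, rfl⟩ := h
    exact hw.endOf_mem
  · rintro ⟨hq, r, rfl⟩
    have := reaches_unfoldNet_append (X := X) r p [] (Reaches.refl hp) hp (by simp)
      (by simpa using hq)
    simpa [LNet.belowSet] using this

lemma append_mem_belowSet_unfoldNet_iff {p : List (Arc V)} (hp : p ∈ N.unfoldVerts)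
    (r : List (Arc V)) : p ++ r ∈ (N.unfoldNet X).belowSet p ↔ p ++ r ∈ N.unfoldVerts := by
  simp [mem_belowSet_unfoldNet_iff hp]

lemma endOf_append_eq_of_endOf_eq {u : V} {p q : List (Arc V)} (hend : endOf u p = endOf u q)
    (r : List (Arc V)) : endOf u (p ++ r) = endOf u (q ++ r) := by
  rw [endOf_append, endOf_append, hend]

lemma append_mem_unfoldVerts_iff {p q : List (Arc V)} (hp : p ∈ N.unfoldVerts)
    (hq : q ∈ N.unfoldVerts) (hend : endOf N.root p = endOf N.root q) (r : List (Arc V)) :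
    p ++ r ∈ N.unfoldVerts ↔ q ++ r ∈ N.unfoldVerts := by
  simp only [unfoldVerts, Set.mem_ofPred_eq, walkFrom_append, hp.1, hq.1, true_and,
    endOf_append_eq_of_endOf_eq hend r, hend]

lemma unfoldNet_arcs_append_eq {p q : List (Arc V)} (hp : p ∈ N.unfoldVerts)
    (hq : q ∈ N.unfoldVerts) (hend : endOf N.root p = endOf N.root q) (r₁ r₂ : List (Arc V)) :
    (N.unfoldNet X).arcs (q ++ r₁) (q ++ r₂) = (N.unfoldNet X).arcs (p ++ r₁) (p ++ r₂) := by
  simp [unfoldNet, append_mem_unfoldVerts_iff hp hq hend]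

lemma mem_unfoldNet_lab_iff {x : V} {w : List (Arc V)} :
    w ∈ (N.unfoldNet X).lab x ↔ x ∈ X ∧ w ∈ N.unfoldVerts ∧ endOf N.root w = x := by
  by_cases hx : x ∈ X <;> simp [unfoldNet, hx]

/-- The isomorphism swaps the prefix `p` for `q`. -/
lemma unfoldNet_subAt_mulIso {p q : List (Arc V)} (hp : p ∈ N.unfoldVerts)
    (hq : q ∈ N.unfoldVerts) (hend : endOf N.root p = endOf N.root q) :
    LNet.MulIso ((N.unfoldNet X).subAt p) ((N.unfoldNet X).subAt q) := by
  have hmem := append_mem_unfoldVerts_iff hp hq hend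
  refine ⟨fun w => q ++ w.drop p.length, ⟨?_, ?_, ?_⟩, ?_, ?_, ?_⟩
  · rintro w hw
    obtain ⟨hw, r, rfl⟩ := (mem_belowSet_unfoldNet_iff hp).1 hw
    show _ ∈ (N.unfoldNet X).belowSet q
    simpa [append_mem_belowSet_unfoldNet_iff hq] using (hmem r).1 hw
  · rintro w₁ hw₁ w₂ hw₂ heq
    obtain ⟨-, r₁, rfl⟩ := (mem_belowSet_unfoldNet_iff hp).1 hw₁
    obtain ⟨-, r₂, rfl⟩ := (mem_belowSet_unfoldNet_iff hp).1 hw₂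
    simpa using heq
  · rintro w hw
    obtain ⟨hw, r, rfl⟩ := (mem_belowSet_unfoldNet_iff hq).1 hw
    exact ⟨p ++ r, (append_mem_belowSet_unfoldNet_iff hp r).2 ((hmem r).2 hw), by simp⟩
  · rintro w₁ hw₁ w₂ hw₂
    obtain ⟨hv₁, r₁, rfl⟩ := (mem_belowSet_unfoldNet_iff hp).1 hw₁
    obtain ⟨hv₂, r₂, rfl⟩ := (mem_belowSet_unfoldNet_iff hp).1 hw₂
    show (if _ then _ else 0) = (if _ then _ else 0)
    simp only [List.drop_left]
    rw [if_pos ⟨(append_mem_belowSet_unfoldNet_iff hq r₁).2 ((hmem r₁).1 hv₁),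
      (append_mem_belowSet_unfoldNet_iff hq r₂).2 ((hmem r₂).1 hv₂)⟩, if_pos ⟨hw₁, hw₂⟩,
      unfoldNet_arcs_append_eq hp hq hend]
  · simp [LNet.subAt]
  · intro x
    ext w
    simp only [LNet.subAt, Set.inter_assoc, Set.inter_self, Set.mem_image, Set.mem_inter_iff,
      mem_unfoldNet_lab_iff, mem_belowSet_unfoldNet_iff hp, mem_belowSet_unfoldNet_iff hq]
    constructor
    · rintro ⟨_, ⟨⟨hx, -, rfl⟩, hr, r, rfl⟩, rfl⟩
      rw [List.drop_left, ← endOf_append_eq_of_endOf_eq hend r]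
      exact ⟨⟨hx, (hmem r).1 hr, rfl⟩, (hmem r).1 hr, List.prefix_append q r⟩
    · rintro ⟨⟨hx, -, rfl⟩, hr, r, rfl⟩
      have hr' := (hmem r).2 hr
      exact ⟨p ++ r, ⟨⟨hx, hr', endOf_append_eq_of_endOf_eq hend r⟩, hr', List.prefix_append p r⟩,
        by simp⟩

/-- The cut of `P` right after `γ`, extended through the following hybrid run to the first
tree vertex. -/
lemma exists_prefix_mem_unfoldVerts_of_mem {P : List (Arc V)} (hP : P ∈ N.unfoldVerts)
    {γ : Arc V} (hγ : γ ∈ P) :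
    ∃ x r, γ ∈ x ∧ x ++ r <+: P ∧ x ++ r ∈ N.unfoldVerts ∧ endOf N.root x = γ.2.1 ∧
      N.WalkFrom γ.2.1 r ∧ (∀ a ∈ r, N.IsHybrid (a : Arc V).1) := by
  obtain ⟨x, y, rfl⟩ := List.append_of_mem hγ
  have hw := walkFrom_append.1 (List.append_cons x γ y ▸ hP.1)
  have hx : endOf N.root (x ++ [γ]) = γ.2.1 := endOf_concat _ _ _
  rw [hx] at hw
  have ht := hP.2
  rw [List.append_cons, endOf_append, hx] at ht
  obtain ⟨r, s, rfl, hr, hrt⟩ := hw.2.exists_hybridRun ht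
  refine ⟨x ++ [γ], r, by simp, ⟨s, by simp⟩, ⟨?_, by rwa [endOf_append, hx]⟩, hx,
    (walkFrom_append.1 hw.2).1, hr⟩
  exact walkFrom_append.2 ⟨hw.1, hx ▸ (walkFrom_append.1 hw.2).1⟩

/-- The two cuts of `exists_prefix_mem_unfoldVerts_of_mem` at the two arcs entering the end of
the cycle end at the same tree vertex, because the hybrid run after it is unique. -/
lemma IsPhyloNetwork.exists_mulIso_subAt_of_containsRetCycle (hN : N.IsPhyloNetwork X)
    {P₁ P₂ : List (Arc V)} (h₁ : P₁ ∈ N.unfoldVerts) (h₂ : P₂ ∈ N.unfoldVerts)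
    (hrc : N.ContainsRetCycle P₁ P₂) :
    ∃ a b, a ∈ (N.unfoldNet X).verts ∧ b ∈ (N.unfoldNet X).verts ∧
      a ≠ b ∧ a ≠ (N.unfoldNet X).root ∧ b ≠ (N.unfoldNet X).root ∧
      LNet.MulIso ((N.unfoldNet X).subAt a) ((N.unfoldNet X).subAt b) ∧
      P₁ ∈ (N.unfoldNet X).belowSet a ∧ P₂ ∈ (N.unfoldNet X).belowSet b := by
  obtain ⟨γ₁, hγ₁, γ₂, hγ₂, hne, he⟩ := hrc.exists_ne_snd_eq hN.acyclic h₁.1 h₂.1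
  obtain ⟨x₁, r₁, hx₁, hpre₁, ha, hend₁, hw₁, hr₁⟩ := exists_prefix_mem_unfoldVerts_of_mem h₁ hγ₁
  obtain ⟨x₂, r₂, hx₂, hpre₂, hb, hend₂, hw₂, hr₂⟩ := exists_prefix_mem_unfoldVerts_of_mem h₂ hγ₂
  rw [he] at hw₁ hend₁
  have ht₁ := ha.2
  have ht₂ := hb.2
  rw [endOf_append, hend₁] at ht₁
  rw [endOf_append, hend₂] at ht₂
  obtain rfl := hN.hybridRun_unique hw₁ hw₂ hr₁ hr₂ ht₁ ht₂
  refine ⟨x₁ ++ r₁, x₂ ++ r₁, ha, hb, fun hab => hne ?_,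
    by simp [unfoldNet, List.ne_nil_of_mem hx₁], by simp [unfoldNet, List.ne_nil_of_mem hx₂],
    unfoldNet_subAt_mulIso ha hb ?_,
    (mem_belowSet_unfoldNet_iff ha).2 ⟨h₁, hpre₁⟩, (mem_belowSet_unfoldNet_iff hb).2 ⟨h₂, hpre₂⟩⟩
  · exact hN.acyclic.eq_of_snd_eq ha.1 (List.mem_append_left r₁ hx₁)
      (hab ▸ List.mem_append_left r₁ hx₂) he
  · rw [endOf_append, endOf_append, hend₁, hend₂]

end Net

namespace LNet

variable {L : Type v} {W V₁ V₂ V₃ : Type*}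

lemma MulIso.trans {M₁ : LNet V₁ L} {M₂ : LNet V₂ L} {M₃ : LNet V₃ L}
    (h : MulIso M₁ M₂) (h' : MulIso M₂ M₃) : MulIso M₁ M₃ := by
  obtain ⟨η, hb, ha, hr, hl⟩ := h
  obtain ⟨η', hb', ha', hr', hl'⟩ := h'
  refine ⟨η' ∘ η, hb'.comp hb, fun u hu w hw => ?_, by simp [hr, hr'], fun x => ?_⟩
  · rw [Function.comp_apply, Function.comp_apply, ha' _ (hb.1 hu) _ (hb.1 hw), ha _ hu _ hw]
  · rw [Set.image_comp, hl x, hl' x]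

lemma MulIso.symm [Nonempty V₁] {M₁ : LNet V₁ L} {M₂ : LNet V₂ L}
    (hroot : M₁.root ∈ M₁.verts) (h : MulIso M₁ M₂) : MulIso M₂ M₁ := by
  obtain ⟨η, hb, ha, hr, hl⟩ := h
  have hinv := hb.invOn_invFunOn
  have hb' := hb.symm hinv.symm
  refine ⟨Function.invFunOn η M₁.verts, hb', fun u hu w hw => ?_, ?_, fun x => ?_⟩
  · rw [← ha _ (hb'.1 hu) _ (hb'.1 hw), hinv.2 hu, hinv.2 hw]
  · rw [← hr]; exact hinv.1 hroot
  · rw [← hl x, Set.image_image]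
    exact (Set.image_congr fun z hz => hinv.1 hz.2).trans (Set.image_id _)

lemma eqClass_eq_of_mulIso [Nonempty V₁] {M : LNet V₁ L} {p q : V₁} (hp : p ∈ M.verts)
    (hiso : MulIso (M.subAt p) (M.subAt q)) : M.eqClass p = M.eqClass q := by
  have hsymm := hiso.symm (M₁ := M.subAt p) (Net.Reaches.refl hp)
  ext u
  simp only [eqClass, Sim, Set.mem_ofPred_eq]
  constructor
  · rintro ⟨hu, rfl | hup⟩
    exacts [⟨hu, .inr hiso⟩, ⟨hu, .inr (hup.trans hiso)⟩]
  · rintro ⟨hu, rfl | huq⟩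
    exacts [⟨hu, .inr hsymm⟩, ⟨hu, .inr (huq.trans hsymm)⟩]

lemma foldUp_mem_verts_of_arcs_ne_zero (M : LNet W L) {a b : Set W ⊕ Set W}
    (h : M.foldUp.arcs a b ≠ 0) : b ∈ M.foldUp.verts := by
  rcases a with d | d <;> rcases b with c | c <;> simp only [foldUp, ite_ne_right_iff] at h
  · exact .inl ⟨c, h.1.2.1, rfl⟩
  · exact .inr ⟨c, ⟨h.1.2.1, h.1.2.2.1⟩, rfl⟩
  · exact .inl ⟨c, h.1.1 ▸ h.1.2.1, rfl⟩
  · exact absurd rfl h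

lemma foldUp_outDeg_inr (M : LNet W L) {c : Set W} (h₁ : M.IsClassOf c) (h₂ : M.ClassHyb c) :
    M.foldUp.outDeg (Sum.inr c) = 1 := by
  rw [Net.outDeg, finsum_eq_single _ (Sum.inl c)]
  · simp [foldUp, h₁, h₂]
  · rintro (c' | c') hc
    · exact if_neg fun h : c' = c ∧ _ => hc (h.1 ▸ rfl)
    · rfl

end LNet

section Stable

open Net

variable {V : Type u} {N : Net V} {X : Set V}

/-- The vertices of `F(U(N)) ≅ N` are the `∼`-classes and one hybrid vertex per hybrid class;
the latter correspond to hybrid vertices of `N`. -/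
lemma IsStable.ncard_treeVerts_le (h : IsStable N X) :
    {v | N.IsTreeVert v}.ncard ≤ {c | (N.unfoldNet X).IsClassOf c}.ncard := by
  obtain ⟨hN, g, hg, -⟩ := h
  set M := N.unfoldNet X
  set T := {v | N.IsTreeVert v}
  set H := {v | N.IsHybrid v}
  set C := {c | M.IsClassOf c}
  set Ch := {c | M.IsClassOf c ∧ M.ClassHyb c}
  have hfin := hN.finite
  have hHfin : H.Finite := hfin.subset fun v hv => hv.1
  have hFverts : M.foldUp.verts = g '' N.verts := hg.1.image_eq.symm
  have hFfin : M.foldUp.verts.Finite := hFverts ▸ hfin.image g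
  have hTH : N.verts.ncard = T.ncard + H.ncard := by
    rw [← Set.ncard_union_eq (s := T) (t := H)
      (Set.disjoint_left.2 fun v ht hh => IsTreeVert.not_isHybrid ht hh)
      (hfin.subset fun v hv => hv.1) hHfin]
    congr 1
    ext v
    exact ⟨fun hv => isTreeVert_or_isHybrid hv, fun hv => hv.elim And.left And.left⟩
  have hCCh : N.verts.ncard = C.ncard + Ch.ncard := by
    rw [← hg.1.injOn.ncard_image, ← hFverts, ← Set.ncard_image_of_injective C Sum.inl_injective,
      ← Set.ncard_image_of_injective Ch Sum.inr_injective]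
    exact Set.ncard_union_eq (by simp [Set.disjoint_left])
      (hFfin.subset Set.subset_union_left) (hFfin.subset Set.subset_union_right)
  have hChH : Ch.ncard ≤ H.ncard := by
    have hsub : Sum.inr '' Ch ⊆ g '' H := by
      rintro _ ⟨c, hc, rfl⟩
      obtain ⟨v, hv, hgv⟩ : Sum.inr c ∈ g '' N.verts := hFverts ▸ Or.inr ⟨c, hc, rfl⟩
      refine ⟨v, hN.isHybrid_of_outDeg_eq_one hv ?_, hgv⟩
      rw [← hg.outDeg_eq (fun u v h => (hN.arcMem u v h).2)
        (fun a b => M.foldUp_mem_verts_of_arcs_ne_zero) hv, hgv]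
      exact M.foldUp_outDeg_inr hc.1 hc.2
    calc Ch.ncard = (Sum.inr '' Ch).ncard :=
          (Set.ncard_image_of_injective _ Sum.inr_injective).symm
      _ ≤ (g '' H).ncard := Set.ncard_le_ncard hsub (hHfin.image g)
      _ ≤ H.ncard := Set.ncard_image_le hHfin
  omega

/-- `t ↦ [path to t]` maps the tree vertices onto the `∼`-classes, so by
`IsStable.ncard_treeVerts_le` it is injective. -/
lemma IsStable.endOf_eq_of_mulIso (h : IsStable N X) {p q : List (Arc V)}
    (hp : p ∈ N.unfoldVerts) (hq : q ∈ N.unfoldVerts)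
    (hiso : LNet.MulIso ((N.unfoldNet X).subAt p) ((N.unfoldNet X).subAt q)) :
    endOf N.root p = endOf N.root q := by
  set M := N.unfoldNet X
  set T := {v | N.IsTreeVert v}
  have hTfin : T.Finite := h.1.finite.subset fun v hv => hv.1
  let φ : V → Set (List (Arc V)) :=
    fun t => M.eqClass (Function.invFunOn (endOf N.root) N.unfoldVerts t)
  have hφ : ∀ r ∈ N.unfoldVerts, φ (endOf N.root r) = M.eqClass r := fun r hr => by
    have hex : ∃ r' ∈ N.unfoldVerts, endOf N.root r' = endOf N.root r := ⟨r, hr, rfl⟩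
    exact LNet.eqClass_eq_of_mulIso (Function.invFunOn_mem hex) <|
      unfoldNet_subAt_mulIso (Function.invFunOn_mem hex) hr (Function.invFunOn_eq hex)
  have himage : φ '' T = {c | M.IsClassOf c} := by
    ext c
    constructor
    · rintro ⟨t, ht, rfl⟩
      obtain ⟨l, hl, rfl⟩ := h.1.connected t ht.1
      exact ⟨l, ⟨hl, ht⟩, hφ l ⟨hl, ht⟩⟩
    · rintro ⟨r, hr, rfl⟩
      exact ⟨endOf N.root r, hr.2, hφ r hr⟩
  have hinj : Set.InjOn φ T := Set.injOn_of_ncard_image_eq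
    (le_antisymm (Set.ncard_image_le hTfin) (himage ▸ h.ncard_treeVerts_le)) hTfin
  exact hinj hp.2 hq.2 (by rw [hφ p hp, hφ q hq]; exact LNet.eqClass_eq_of_mulIso hp hiso)

end Stable

theorem reticulation_cycle_iff_isomorphic_subtrees_general {V : Type u} (X : Set V)
    (N : Net V) (h : IsStable N X)
    (P₁ P₂ : List (Arc V))
    (h₁ : P₁ ∈ (Net.unfoldNet N X).verts) (h₂ : P₂ ∈ (Net.unfoldNet N X).verts) :
    Net.ContainsRetCycle N P₁ P₂ ↔
      ∃ a b, a ∈ (Net.unfoldNet N X).verts ∧ b ∈ (Net.unfoldNet N X).verts ∧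
        a ≠ b ∧ a ≠ (Net.unfoldNet N X).root ∧ b ≠ (Net.unfoldNet N X).root ∧
        LNet.MulIso ((Net.unfoldNet N X).subAt a) ((Net.unfoldNet N X).subAt b) ∧
        P₁ ∈ (Net.unfoldNet N X).belowSet a ∧ P₂ ∈ (Net.unfoldNet N X).belowSet b := by
  refine ⟨h.1.exists_mulIso_subAt_of_containsRetCycle h₁ h₂, ?_⟩
  rintro ⟨a, b, ha, hb, hab, -, -, hiso, hA, hB⟩
  have hpre₁ := ((Net.mem_belowSet_unfoldNet_iff ha).1 hA).2
  have hpre₂ := ((Net.mem_belowSet_unfoldNet_iff hb).1 hB).2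
  have hcycle := h.1.acyclic.containsRetCycle_of_ne ha.1 hb.1 hab (h.endOf_eq_of_mulIso ha hb hiso)
  exact hcycle.mono (fun _ hα => hpre₁.subset hα) (fun _ hα => hpre₂.subset hα)

/-- Let `N` be a stable phylogenetic network on `X` and let
`P₁, P₂ ∈ π⁻(N)` be distinct.  Then the union of `P₁` and `P₂` contains a
subgraph that is a reticulation cycle of `N` if and only if the vertices
`Ψ_N(P₁)` and `Ψ_N(P₂)` of `U(N)` are contained in two distinct but
isomorphic subMUL-trees of `U(N)`, i.e. there are distinct non-root vertices
`a, b` of `U(N)` such that `U(N)_a ≅ U(N)_b`, `Ψ_N(P₁) ∈ V(U(N)_a)` and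
`Ψ_N(P₂) ∈ V(U(N)_b)`. -/
theorem reticulation_cycle_iff_isomorphic_subtrees {V : Type u} (X : Set V)
    (N : Net V) (hX : 3 ≤ X.ncard) (h : IsStable N X)
    (P₁ P₂ : List (Arc V))
    (h₁ : P₁ ∈ (Net.unfoldNet N X).verts) (h₂ : P₂ ∈ (Net.unfoldNet N X).verts)
    (hne : P₁ ≠ P₂) :
    Net.ContainsRetCycle N P₁ P₂ ↔
      ∃ a b, a ∈ (Net.unfoldNet N X).verts ∧ b ∈ (Net.unfoldNet N X).verts ∧
        a ≠ b ∧ a ≠ (Net.unfoldNet N X).root ∧ b ≠ (Net.unfoldNet N X).root ∧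
        LNet.MulIso ((Net.unfoldNet N X).subAt a) ((Net.unfoldNet N X).subAt b) ∧
        P₁ ∈ (Net.unfoldNet N X).belowSet a ∧ P₂ ∈ (Net.unfoldNet N X).belowSet b :=
  reticulation_cycle_iff_isomorphic_subtrees_general X N h P₁ P₂ h₁ h₂

end Phylo
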